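/- arXiv:1902.00919 — 3 statements merged into one kernel-verified Lean document; each statement's English description precedes it below -/
import Mathlib

section
/- The inverse weight function is subadditive under disjoint union: for disjoint finite sets S₁, S₂ of items, profits p₁+p₂ and cardinalities k₁+k₂, we have φ_{S₁∪S₂}(p₁+p₂, k₁+k₂) ≤ φ_{S₁}(p₁, k₁) + φ_{S₂}(p₂, k₂). -/
/-- The inverse weight function `φ_T(p,k)`: the minimum total weight of a subset `T' ⊆ T`
with total profit at least `pr` and at most `k` elements; `⊤` (i.e. `+∞`) if infeasible. -/
noncomputable def invWeight {α : Type*} (w p : α → ℝ) (T : Finset α) (pr : ℝ) (k : ℕ) :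
    ENNReal :=
  sInf {x | ∃ T' ⊆ T, pr ≤ ∑ e ∈ T', p e ∧ T'.card ≤ k ∧
    x = ENNReal.ofReal (∑ e ∈ T', w e)}

/-- Subadditivity of the inverse weight function under disjoint union:
`φ_{S₁∪S₂}(p₁+p₂, k₁+k₂) ≤ φ_{S₁}(p₁,k₁) + φ_{S₂}(p₂,k₂)`. -/
theorem stmt_3 {α : Type*} [DecidableEq α] (w p : α → ℝ) (S₁ S₂ : Finset α)
    (hdisj : Disjoint S₁ S₂) (hw : ∀ e, 0 ≤ w e) (hp : ∀ e, 0 ≤ p e)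
    (p₁ p₂ : ℝ) (k₁ k₂ : ℕ) :
    invWeight w p (S₁ ∪ S₂) (p₁ + p₂) (k₁ + k₂) ≤
      invWeight w p S₁ p₁ k₁ + invWeight w p S₂ p₂ k₂ := by
  unfold invWeight
  rw [ENNReal.sInf_add]
  refine le_iInf₂ fun x hx => ?_
  rw [add_comm x, ENNReal.sInf_add]
  refine le_iInf₂ fun y hy => ?_
  obtain ⟨T₁, hT₁, hp₁, hk₁, rfl⟩ := hx
  obtain ⟨T₂, hT₂, hp₂, hk₂, rfl⟩ := hy
  have hd : Disjoint T₁ T₂ := hdisj.mono hT₁ hT₂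
  refine sInf_le ⟨T₁ ∪ T₂, Finset.union_subset_union hT₁ hT₂, ?_, ?_, ?_⟩
  · rw [Finset.sum_union hd]; exact add_le_add hp₁ hp₂
  · rw [Finset.card_union_of_disjoint hd]; exact add_le_add hk₁ hk₂
  · rw [Finset.sum_union hd, ENNReal.ofReal_add (Finset.sum_nonneg fun e _ => hw e)
      (Finset.sum_nonneg fun e _ => hw e), add_comm]
end

section
/- Discretized two-set convolution error bound: for disjoint sets S₁, S₂ and a finite grid X ⊆ [a,b] with mesh δ_X = max spacing between consecutive grid points, the discretized profit function satisfies φ^X_{S₁∪S₂}(ω,k) ≥ φ_{S₁∪S₂}(ω,k) whenever both are defined via their inverse weight functions, and the corresponding profit values satisfy φ^{profit,X}(ω,k) ≥ φ^{profit}(ω,k) − 2δ_X, where φ^{profit,X} restricts profits to grid points rounded down. -/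
/-- The discretized two-set convolution `(φ_{S₁} ⊗ φ_{S₂})^X(p,k)`: the profit arguments
`p₁, p₂` are restricted to the grid `X`. -/
noncomputable def discConv {α : Type*} (w p : α → ℝ) (X : Finset ℝ) (S₁ S₂ : Finset α)
    (pr : ℝ) (k : ℕ) : ENNReal :=
  sInf {x | ∃ p₁ ∈ X, ∃ p₂ ∈ X, ∃ k₁ k₂ : ℕ, k₁ + k₂ ≤ k ∧ pr ≤ p₁ + p₂ ∧
    x = invWeight w p S₁ p₁ k₁ + invWeight w p S₂ p₂ k₂}

/-- The (exact) profit function `φ^{profit}_S(ω,k)`. -/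
noncomputable def profitFn {α : Type*} (w p : α → ℝ) (S : Finset α) (ω : ℝ) (k : ℕ) : ℝ :=
  sSup {x : ℝ | ∃ T' ⊆ S, ∑ e ∈ T', w e ≤ ω ∧ T'.card ≤ k ∧ x = ∑ e ∈ T', p e}

/-- The discretized profit function: the best grid profit `x ∈ X` achievable within
budget `ω` and cardinality `k` according to the discretized convolution. -/
noncomputable def profitFnX {α : Type*} (w p : α → ℝ) (X : Finset ℝ) (S₁ S₂ : Finset α)
    (ω : ℝ) (k : ℕ) : ℝ :=
  sSup {x : ℝ | x ∈ X ∧ discConv w p X S₁ S₂ x k ≤ ENNReal.ofReal ω}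

lemma invWeight_mem {α : Type*} (w p : α → ℝ) (T : Finset α) (pr : ℝ) (k : ℕ)
    (h : invWeight w p T pr k ≠ ⊤) :
    ∃ T' ⊆ T, pr ≤ ∑ e ∈ T', p e ∧ T'.card ≤ k ∧
      invWeight w p T pr k = ENNReal.ofReal (∑ e ∈ T', w e) := by
  set A := {x | ∃ T' ⊆ T, pr ≤ ∑ e ∈ T', p e ∧ T'.card ≤ k ∧
      x = ENNReal.ofReal (∑ e ∈ T', w e)} with hA
  have hne : A.Nonempty := by
    by_contra h'
    rw [Set.not_nonempty_iff_eq_empty] at h'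
    simp [invWeight, ← hA, h'] at h
  have hfin : A.Finite := by
    apply Set.Finite.subset (Set.Finite.image (fun T' => ENNReal.ofReal (∑ e ∈ T', w e))
      (T.powerset : Finset (Finset α)).finite_toSet)
    rintro x ⟨T', hT', _, _, rfl⟩
    exact ⟨T', Finset.mem_powerset.mpr hT', rfl⟩
  have hm : sInf A ∈ A := hne.csInf_mem hfin
  exact hm

lemma invWeight_le {α : Type*} (w p : α → ℝ) (T T' : Finset α) (pr : ℝ) (k : ℕ)
    (hT' : T' ⊆ T) (hpr : pr ≤ ∑ e ∈ T', p e) (hk : T'.card ≤ k) :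
    invWeight w p T pr k ≤ ENNReal.ofReal (∑ e ∈ T', w e) :=
  sInf_le ⟨T', hT', hpr, hk, rfl⟩

lemma invWeight_union_le {α : Type*} [DecidableEq α] (w p : α → ℝ) (hw : ∀ e, 0 ≤ w e)
    (S₁ S₂ : Finset α) (hdisj : Disjoint S₁ S₂) (p₁ p₂ pr : ℝ) (k₁ k₂ k : ℕ)
    (hk : k₁ + k₂ ≤ k) (hpr : pr ≤ p₁ + p₂) :
    invWeight w p (S₁ ∪ S₂) pr k ≤ invWeight w p S₁ p₁ k₁ + invWeight w p S₂ p₂ k₂ := by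
  by_cases h1 : invWeight w p S₁ p₁ k₁ = ⊤
  · simp [h1]
  by_cases h2 : invWeight w p S₂ p₂ k₂ = ⊤
  · simp [h2]
  obtain ⟨T₁, hT₁, hpr₁, hk₁, he₁⟩ := invWeight_mem w p S₁ p₁ k₁ h1
  obtain ⟨T₂, hT₂, hpr₂, hk₂, he₂⟩ := invWeight_mem w p S₂ p₂ k₂ h2
  have hdT : Disjoint T₁ T₂ := hdisj.mono hT₁ hT₂
  have hsub : T₁ ∪ T₂ ⊆ S₁ ∪ S₂ := Finset.union_subset_union hT₁ hT₂
  have hps : ∑ e ∈ T₁ ∪ T₂, p e = ∑ e ∈ T₁, p e + ∑ e ∈ T₂, p e :=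
    Finset.sum_union hdT
  have hws : ∑ e ∈ T₁ ∪ T₂, w e = ∑ e ∈ T₁, w e + ∑ e ∈ T₂, w e :=
    Finset.sum_union hdT
  calc invWeight w p (S₁ ∪ S₂) pr k ≤ ENNReal.ofReal (∑ e ∈ T₁ ∪ T₂, w e) := by
        apply invWeight_le w p _ _ _ _ hsub
        · rw [hps]; linarith
        · exact le_trans (Finset.card_union_le _ _) (le_trans (add_le_add hk₁ hk₂) hk)
    _ = invWeight w p S₁ p₁ k₁ + invWeight w p S₂ p₂ k₂ := by
        rw [hws, ENNReal.ofReal_add (Finset.sum_nonneg fun e _ => hw e)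
          (Finset.sum_nonneg fun e _ => hw e), he₁, he₂]

theorem stmt6_part1 {α : Type*} [DecidableEq α] (w p : α → ℝ) (S₁ S₂ : Finset α)
    (X : Finset ℝ) (hdisj : Disjoint S₁ S₂) (hw : ∀ e, 0 ≤ w e) (pr : ℝ) (k' : ℕ) :
    invWeight w p (S₁ ∪ S₂) pr k' ≤ discConv w p X S₁ S₂ pr k' := by
  apply le_sInf
  rintro x ⟨p₁, hp₁, p₂, hp₂, k₁, k₂, hk, hpr, rfl⟩
  exact invWeight_union_le w p hw S₁ S₂ hdisj p₁ p₂ pr k₁ k₂ k' hk hpr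

/-- For disjoint `S₁, S₂` and a grid `X ⊆ [0,b]` with mesh `δ` (every point of
`[0,b]` has a grid point below it within distance `δ`, `0 ∈ X`, and `X` closed under
addition below `b`), the discretized inverse weight function dominates the exact one, and
the discretized profit value loses at most `2δ`:
`φ^{profit,X}(ω,k) ≥ φ^{profit}(ω,k) − 2δ`. -/
theorem stmt_6 {α : Type*} [DecidableEq α] (w p : α → ℝ) (S₁ S₂ : Finset α)
    (X : Finset ℝ) (b δ ω : ℝ) (k : ℕ)
    (hdisj : Disjoint S₁ S₂) (hw : ∀ e, 0 ≤ w e) (hp : ∀ e, 0 ≤ p e)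
    (hδ : 0 ≤ δ) (hω : 0 ≤ ω)
    (hX0 : (0 : ℝ) ∈ X) (hXb : ∀ x ∈ X, 0 ≤ x ∧ x ≤ b)
    (hmesh : ∀ x : ℝ, 0 ≤ x → x ≤ b → ∃ y ∈ X, y ≤ x ∧ x - y ≤ δ)
    (hclosed : ∀ y₁ ∈ X, ∀ y₂ ∈ X, y₁ + y₂ ≤ b → y₁ + y₂ ∈ X)
    (hrange : ∀ T' ⊆ S₁ ∪ S₂, ∑ e ∈ T', p e ≤ b) :
    (∀ (pr : ℝ) (k' : ℕ),
      invWeight w p (S₁ ∪ S₂) pr k' ≤ discConv w p X S₁ S₂ pr k') ∧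
    profitFn w p (S₁ ∪ S₂) ω k - 2 * δ ≤ profitFnX w p X S₁ S₂ ω k := by
  refine ⟨fun pr k' => stmt6_part1 w p S₁ S₂ X hdisj hw pr k', ?_⟩
  -- the exact profit set is attained
  set P := {x : ℝ | ∃ T' ⊆ S₁ ∪ S₂, ∑ e ∈ T', w e ≤ ω ∧ T'.card ≤ k ∧ x = ∑ e ∈ T', p e}
    with hP
  have hPne : P.Nonempty := ⟨0, ∅, Finset.empty_subset _, by simpa using hω, by simp, by simp⟩
  have hPfin : P.Finite := by
    apply Set.Finite.subset (Set.Finite.image (fun T' => ∑ e ∈ T', p e)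
      ((S₁ ∪ S₂).powerset : Finset (Finset α)).finite_toSet)
    rintro x ⟨T', hT', _, _, rfl⟩
    exact ⟨T', Finset.mem_powerset.mpr hT', rfl⟩
  have hmem : sSup P ∈ P := hPne.csSup_mem hPfin
  obtain ⟨T', hT'sub, hT'w, hT'k, hT'eq⟩ := hmem
  set T₁ := T' ∩ S₁ with hT₁
  set T₂ := T' ∩ S₂ with hT₂
  have hTsplit : T' = T₁ ∪ T₂ := by
    rw [hT₁, hT₂, ← Finset.inter_union_distrib_left, Finset.inter_eq_left.mpr hT'sub]
  have hdT : Disjoint T₁ T₂ :=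
    hdisj.mono Finset.inter_subset_right Finset.inter_subset_right
  have hT₁sub : T₁ ⊆ S₁ ∪ S₂ := Finset.inter_subset_left.trans hT'sub
  have hT₂sub : T₂ ⊆ S₁ ∪ S₂ := Finset.inter_subset_left.trans hT'sub
  set P₁ := ∑ e ∈ T₁, p e with hP₁
  set P₂ := ∑ e ∈ T₂, p e with hP₂
  have hsump : P₁ + P₂ = ∑ e ∈ T', p e := by
    rw [hP₁, hP₂, hTsplit, Finset.sum_union hdT]
  have hsumw : ∑ e ∈ T₁, w e + ∑ e ∈ T₂, w e = ∑ e ∈ T', w e := by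
    rw [hTsplit, Finset.sum_union hdT]
  obtain ⟨p₁, hp₁X, hp₁le, hp₁δ⟩ := hmesh P₁ (Finset.sum_nonneg fun e _ => hp e)
    (hrange T₁ hT₁sub)
  obtain ⟨p₂, hp₂X, hp₂le, hp₂δ⟩ := hmesh P₂ (Finset.sum_nonneg fun e _ => hp e)
    (hrange T₂ hT₂sub)
  have hxX : p₁ + p₂ ∈ X := by
    apply hclosed p₁ hp₁X p₂ hp₂X
    have := hrange T' hT'sub
    linarith [hsump]
  have hcard : T₁.card + T₂.card ≤ k := by
    rw [← Finset.card_union_of_disjoint hdT, ← hTsplit]; exact hT'k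
  have hdc : discConv w p X S₁ S₂ (p₁ + p₂) k ≤ ENNReal.ofReal ω := by
    calc discConv w p X S₁ S₂ (p₁ + p₂) k
        ≤ invWeight w p S₁ p₁ T₁.card + invWeight w p S₂ p₂ T₂.card :=
          sInf_le ⟨p₁, hp₁X, p₂, hp₂X, T₁.card, T₂.card, hcard, le_refl _, rfl⟩
      _ ≤ ENNReal.ofReal (∑ e ∈ T₁, w e) + ENNReal.ofReal (∑ e ∈ T₂, w e) :=
          add_le_add
            (invWeight_le w p S₁ T₁ p₁ T₁.card Finset.inter_subset_right hp₁le le_rfl)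
            (invWeight_le w p S₂ T₂ p₂ T₂.card Finset.inter_subset_right hp₂le le_rfl)
      _ = ENNReal.ofReal (∑ e ∈ T', w e) := by
          rw [← ENNReal.ofReal_add (Finset.sum_nonneg fun e _ => hw e)
            (Finset.sum_nonneg fun e _ => hw e), hsumw]
      _ ≤ ENNReal.ofReal ω := ENNReal.ofReal_le_ofReal hT'w
  have hbdd : BddAbove {x : ℝ | x ∈ X ∧ discConv w p X S₁ S₂ x k ≤ ENNReal.ofReal ω} :=
    X.finite_toSet.bddAbove.mono fun x hx => hx.1
  have hge : p₁ + p₂ ≤ profitFnX w p X S₁ S₂ ω k := le_csSup hbdd ⟨hxX, hdc⟩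
  have : profitFn w p (S₁ ∪ S₂) ω k = P₁ + P₂ := by rw [profitFn, ← hP, hT'eq, hsump]
  linarith
end

section
/- The slope bound for the optimum index function on a slice: under the convexity of the class weight function φ^X_{L_a}(λ_a θ, θ) in θ (strict convexity from distinct weights), the minimizing index χ_H(ζ) = argmin_θ { φ^X_{L_a}(λ_a θ, θ) + φ^X_S(p₀+λ_a(ζ−θ), k₀+(ζ−θ)) } satisfies (χ_H(ζ₂) − χ_H(ζ₁))/(ζ₂ − ζ₁) ≤ 1 for all ζ₁ ≠ ζ₂. Equivalently, for integers ζ₁ < ζ₂, χ_H(ζ₂) − χ_H(ζ₁) ≤ ζ₂ − ζ₁. -/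
private lemma slope_mono (f : ℤ → ℝ)
    (hconv : ∀ t : ℤ, f (t + 1) - f t < f (t + 2) - f (t + 1)) :
    Monotone (fun t : ℤ => f (t + 1) - f t) := by
  have : StrictMono (fun t : ℤ => f (t + 1) - f t) := by
    apply strictMono_int_of_lt_succ
    intro t
    have h2 : t + 1 + 1 = t + 2 := by ring
    simpa [h2] using hconv t
  exact this.monotone

private lemma shift_mono (f : ℤ → ℝ)
    (hconv : ∀ t : ℤ, f (t + 1) - f t < f (t + 2) - f (t + 1))
    (a b : ℤ) (hab : a ≤ b) :
    ∀ n : ℕ, f (a + n) - f a ≤ f (b + n) - f b := by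
  intro n
  induction n with
  | zero => simp
  | succ m ih =>
    have hs : f ((a + m) + 1) - f (a + m) ≤ f ((b + m) + 1) - f (b + m) :=
      slope_mono f hconv (show a + (m:ℤ) ≤ b + m by omega)
    have e1 : a + (↑(m + 1) : ℤ) = (a + m) + 1 := by push_cast; ring
    have e2 : b + (↑(m + 1) : ℤ) = (b + m) + 1 := by push_cast; ring
    rw [e1, e2]
    linarith

/-- abstract form of the slope bound for the optimum index function: let
`f : ℤ → ℝ` be strictly convex and `g : ℤ → ℝ` arbitrary, and suppose `χ ζ` is the minimal
minimizer of `θ ↦ f θ + g (ζ − θ)`. Then `χ ζ₂ − χ ζ₁ ≤ ζ₂ − ζ₁` for all `ζ₁ ≤ ζ₂`. -/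
theorem stmt_11 (f g : ℤ → ℝ) (χ : ℤ → ℤ)
    (hconv : ∀ t : ℤ, f (t + 1) - f t < f (t + 2) - f (t + 1))
    (hmin : ∀ ζ θ : ℤ, f (χ ζ) + g (ζ - χ ζ) ≤ f θ + g (ζ - θ))
    (hminimal : ∀ ζ θ : ℤ, f θ + g (ζ - θ) = f (χ ζ) + g (ζ - χ ζ) → χ ζ ≤ θ)
    (ζ₁ ζ₂ : ℤ) (h : ζ₁ ≤ ζ₂) :
    χ ζ₂ - χ ζ₁ ≤ ζ₂ - ζ₁ := by
  by_contra hcon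
  push_neg at hcon
  set d : ℤ := ζ₂ - ζ₁ with hd
  have hd0 : 0 ≤ d := by omega
  have h1 := hmin ζ₁ (χ ζ₂ - d)
  have e1 : ζ₁ - (χ ζ₂ - d) = ζ₂ - χ ζ₂ := by omega
  rw [e1] at h1
  have h2 := hmin ζ₂ (χ ζ₁ + d)
  have e2 : ζ₂ - (χ ζ₁ + d) = ζ₁ - χ ζ₁ := by omega
  rw [e2] at h2
  -- convexity: f (χ ζ₁ + d) - f (χ ζ₁) ≤ f (χ ζ₂) - f (χ ζ₂ - d)
  have hab : χ ζ₁ ≤ χ ζ₂ - d := by omega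
  have key := shift_mono f hconv (χ ζ₁) (χ ζ₂ - d) hab d.toNat
  have hcast : (d.toNat : ℤ) = d := Int.toNat_of_nonneg hd0
  rw [hcast] at key
  have e3 : χ ζ₂ - d + d = χ ζ₂ := by ring
  rw [e3] at key
  -- force equality in h2
  have heq : f (χ ζ₁ + d) + g (ζ₁ - χ ζ₁) = f (χ ζ₂) + g (ζ₂ - χ ζ₂) := by
    linarith
  have := hminimal ζ₂ (χ ζ₁ + d) (by rw [e2]; linarith [heq])
  omega
end
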